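/- arXiv:2006.11650 — 3 statements merged into one kernel-verified Lean document; each statement's English description precedes it below -/
import Mathlib

section
/- Let F be a class of functions from ℝ^r to ℝ, each L(F)-Lipschitz with respect to the Euclidean norm, and H a class of functions from ℝ^d to ℝ^r. Fix a dataset X consisting of n points x_{ji} ∈ ℝ^d for each of t tasks. For the empirical ℓ2 pseudometrics d_{2,X}(f(h), f'(h'))² = (1/nt)∑_{j,i}(f_j(h(x_{ji})) − f'_j(h'(x_{ji})))² on F^{⊗t}(H), d_{2,X}(h,h')² = (1/nt)∑_{k=1}^r∑_{j,i}(h_k(x_{ji}) − h'_k(x_{ji}))² on H, and d_{2,Z}(f,f')² = (1/n)∑_{i=1}^n(f(z_i) − f'(z_i))² on F for an n-point set Z ⊆ ℝ^r, let N_{2,·}(ε; d, ·) denote the ε-covering number in the indicated pseudometric. Then for all ε1, ε2 > 0: log N_{2,X}( L(F)·ε1 + ε2 ; d_{2,X}, F^{⊗t}(H) ) ≤ log N_{2,X}( ε1 ; d_{2,X}, H ) + t · max_{Z∈𝒵} log N_{2,Z}( ε2 ; d_{2,Z}, F ), where 𝒵 = {(h(x_{j1}),…,h(x_{jn})) : h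 ∈ H, j ∈ [t]}. -/
/-! Statement 1: covering-number chain rule for the composed class
`F^{⊗t}(H)`.  For covering at scale `L(F)·ε₁ + ε₂` in the empirical ℓ₂
pseudometric on the composed class,
`log N(L(F)·ε₁ + ε₂; F^{⊗t}(H)) ≤ log N(ε₁; H) + t · max_{Z∈𝒵} log N(ε₂; F)`,
stated here in the equivalent multiplicative form
`N(L(F)·ε₁ + ε₂; F^{⊗t}(H)) ≤ N(ε₁; H) · (max_{Z∈𝒵} N(ε₂; F))^t`
(valid also when covering numbers are infinite). -/

open Set

noncomputable section

/-- Euclidean norm of a vector given as a function. -/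
def eNorm {n : ℕ} (v : Fin n → ℝ) : ℝ := Real.sqrt (∑ i, v i ^ 2)

/-- `C` is an internal `ε`-cover of `A` for the pseudometric `dist`. -/
def IsCover {S : Type*} (dist : S → S → ℝ) (A C : Set S) (ε : ℝ) : Prop :=
  C ⊆ A ∧ ∀ a ∈ A, ∃ c ∈ C, dist a c ≤ ε

/-- Minimal cardinality of an internal `ε`-cover (`⊤` if no finite cover exists). -/
def covNum {S : Type*} (dist : S → S → ℝ) (A : Set S) (ε : ℝ) : ℕ∞ :=
  ⨅ (C : Finset S) (_ : IsCover dist A (C : Set S) ε), (C.card : ℕ∞)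

/-! Cover `H` at scale `ε₁` by a finite set `C`, and for every centre `c ∈ C` and task `j` cover
`F` at scale `ε₂` in the empirical metric on the mapped points `c (x j i)`. The pairs
`((g_j)_j, c)` then cover the composed class: going from `(f, h)` to `(g, c)` through `(f, c)`,
the first leg costs at most `L(F) · d(h, c)` by the Lipschitz property and the second is the
root mean square over tasks of the distances `d(f_j, g_j) ≤ ε₂`. There are at most
`|C| · m ^ t` such pairs, `m` bounding the covering numbers of `F`. -/

section Covering

variable {S : Type*} {dist : S → S → ℝ} {A : Set S} {ε : ℝ}

theorem IsCover.covNum_le {C : Finset S} (hC : IsCover dist A C ε) :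
    covNum dist A ε ≤ C.card :=
  iInf₂_le C hC

theorem covNum_empty : covNum dist ∅ ε = 0 := by
  simpa using (IsCover.covNum_le (C := ∅) ⟨by simp, by simp⟩ : covNum dist ∅ ε ≤ _)

theorem covNum_ne_zero (hA : A.Nonempty) : covNum dist A ε ≠ 0 := by
  refine Order.one_le_iff_ne_zero.1 (le_iInf₂ fun C hC => ?_)
  obtain ⟨c, hc, -⟩ := hC.2 _ hA.some_mem
  exact_mod_cast Finset.card_pos.2 ⟨c, hc⟩

theorem exists_isCover_card_le {m : ℕ} (h : covNum dist A ε ≤ m) :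
    ∃ C : Finset S, IsCover dist A C ε ∧ C.card ≤ m := by
  have : covNum dist A ε < (m + 1 : ℕ) := h.trans_lt (by exact_mod_cast m.lt_succ_self)
  simpa only [covNum, iInf_lt_iff, Nat.cast_lt, Nat.lt_succ_iff, exists_prop] using this

end Covering

theorem covNum_pi_le {ι α : Type*} [Fintype ι] (D : (ι → α) → (ι → α) → ℝ)
    (d : ι → α → α → ℝ) (F : ι → Set α) {ε : ℝ} {m : ℕ}
    (hF : ∀ j, covNum (d j) (F j) ε ≤ m)
    (hD : ∀ f g, (∀ j, d j (f j) (g j) ≤ ε) → D f g ≤ ε) :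
    covNum D {f | ∀ j, f j ∈ F j} ε ≤ (m ^ Fintype.card ι : ℕ) := by
  classical
  choose C hC hCcard using fun j => exists_isCover_card_le (hF j)
  have hcover : IsCover D {f | ∀ j, f j ∈ F j} (Fintype.piFinset C : Set (ι → α)) ε := by
    refine ⟨fun g hg j => (hC j).1 (Fintype.mem_piFinset.1 hg j), fun f hf => ?_⟩
    choose g hg hfg using fun j => (hC j).2 (f j) (hf j)
    exact ⟨g, Fintype.mem_piFinset.2 hg, hD f g hfg⟩
  calc covNum D _ ε ≤ (Fintype.piFinset C).card := hcover.covNum_le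
    _ ≤ (m ^ Fintype.card ι : ℕ) := by
      rw [Fintype.card_piFinset]
      exact_mod_cast Finset.prod_le_pow_card _ _ _ fun j _ => hCcard j

theorem covNum_prod_le {α β : Type*} (dist : α × β → α × β → ℝ) (G : Set α) (H : Set β)
    (dH : β → β → ℝ) (dG : β → α → α → ℝ) {ε₁ ε₂ ε : ℝ} {CH : Finset β}
    (hCH : IsCover dH H CH ε₁) {m : ℕ} (hG : ∀ c ∈ H, covNum (dG c) G ε₂ ≤ m)
    (hdist : ∀ a ∈ G, ∀ h ∈ H, ∀ a' c, dH h c ≤ ε₁ → dG c a a' ≤ ε₂ →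
      dist (a, h) (a', c) ≤ ε) :
    covNum dist (G ×ˢ H) ε ≤ (CH.card * m : ℕ) := by
  classical
  choose! CG hCG hCGcard using fun c (hc : c ∈ H) => exists_isCover_card_le (hG c hc)
  set D := CH.biUnion fun c => CG c ×ˢ {c}
  have hmem : ∀ a c, (a, c) ∈ D ↔ c ∈ CH ∧ a ∈ CG c := by simp [D, and_comm]
  have hcover : IsCover dist (G ×ˢ H) D ε := by
    refine ⟨fun ⟨a, c⟩ hp => ?_, fun ⟨a, h⟩ ⟨ha, hh⟩ => ?_⟩
    · obtain ⟨hc, ha⟩ := (hmem a c).1 hp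
      exact ⟨(hCG c (hCH.1 hc)).1 ha, hCH.1 hc⟩
    · obtain ⟨c, hc, hhc⟩ := hCH.2 h hh
      obtain ⟨a', ha', haa'⟩ := (hCG c (hCH.1 hc)).2 a ha
      exact ⟨(a', c), (hmem a' c).2 ⟨hc, ha'⟩, hdist a ha h hh a' c hhc haa'⟩
  calc covNum dist (G ×ˢ H) ε ≤ D.card := hcover.covNum_le
    _ ≤ (CH.card * m : ℕ) := Nat.cast_le.2 <| Finset.card_biUnion_le_card_mul _ _ _
      fun c hc => by simpa using hCGcard c (hCH.1 hc)

theorem ENat.le_mul_pow_of_forall_natCast {x y z : ℕ∞} {t : ℕ} (ht : t ≠ 0) (hy : y ≠ 0)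
    (hz : z ≠ 0) (h : ∀ a b : ℕ, y = a → z = b → x ≤ a * b ^ t) : x ≤ y * z ^ t := by
  induction y using ENat.recTopCoe with
  | top => simp [ENat.top_mul (pow_ne_zero t hz)]
  | coe a =>
    induction z using ENat.recTopCoe with
    | top => simp [ENat.top_pow ht, ENat.mul_top hy]
    | coe b => exact h a b rfl rfl

theorem eNorm_sq {n : ℕ} (v : Fin n → ℝ) : eNorm v ^ 2 = ∑ i, v i ^ 2 :=
  Real.sq_sqrt (by positivity)

theorem sqrt_sum_sq_add_le {ι : Type*} [Fintype ι] (a b : ι → ℝ) :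
    √(∑ i, (a i + b i) ^ 2) ≤ √(∑ i, a i ^ 2) + √(∑ i, b i ^ 2) := by
  simpa [EuclideanSpace.norm_eq, ← WithLp.toLp_add] using
    norm_add_le (WithLp.toLp 2 a) (WithLp.toLp 2 b)

theorem sqrt_sum_sq_sub_le_of_lipschitz {κ : Type*} [Fintype κ] {r : ℕ} {L : ℝ} (hL : 0 ≤ L)
    (σ : κ → (Fin r → ℝ) → ℝ) (hσ : ∀ p z z', |σ p z - σ p z'| ≤ L * eNorm (z - z'))
    (u v : κ → Fin r → ℝ) :
    √(∑ p, (σ p (u p) - σ p (v p)) ^ 2) ≤ L * √(∑ p, ∑ k, (u p k - v p k) ^ 2) := by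
  have hpt : ∀ p, (σ p (u p) - σ p (v p)) ^ 2 ≤ L ^ 2 * ∑ k, (u p k - v p k) ^ 2 := by
    intro p
    have := pow_le_pow_left₀ (abs_nonneg _) (hσ p (u p) (v p)) 2
    rwa [sq_abs, mul_pow, eNorm_sq] at this
  calc √(∑ p, (σ p (u p) - σ p (v p)) ^ 2) ≤ √(L ^ 2 * ∑ p, ∑ k, (u p k - v p k) ^ 2) := by
        rw [Finset.mul_sum]
        exact Real.sqrt_le_sqrt (Finset.sum_le_sum fun p _ => hpt p)
    _ = L * √(∑ p, ∑ k, (u p k - v p k) ^ 2) := by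
        rw [Real.sqrt_mul (sq_nonneg L), Real.sqrt_sq hL]

theorem sqrt_sum_div_mul_card_le {ι : Type*} [Fintype ι] [Nonempty ι] {s : ι → ℝ} {N ε : ℝ}
    (hs : ∀ j, √(s j / N) ≤ ε) : √((∑ j, s j) / (N * Fintype.card ι)) ≤ ε := by
  simp only [Real.sqrt_le_iff] at hs ⊢
  refine ⟨(hs (Classical.arbitrary ι)).1, ?_⟩
  have hcard : (0 : ℝ) < Fintype.card ι := by exact_mod_cast Fintype.card_pos
  calc (∑ j, s j) / (N * Fintype.card ι) = (∑ j, s j / N) / Fintype.card ι := by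
        rw [← Finset.sum_div, div_div]
    _ ≤ (∑ _j : ι, ε ^ 2) / Fintype.card ι := by
        gcongr with j; exact (hs j).2
    _ = ε ^ 2 := by simp [field]

theorem sqrt_mean_sq_comp_sub_le {r n t : ℕ} {L ε₁ ε₂ : ℝ} (hL : 0 ≤ L)
    (f g : Fin t → (Fin r → ℝ) → ℝ) (hf : ∀ j z z', |f j z - f j z'| ≤ L * eNorm (z - z'))
    (u v : Fin t → Fin n → Fin r → ℝ)
    (huv : √((∑ k, ∑ j, ∑ i, (u j i k - v j i k) ^ 2) / (n * t)) ≤ ε₁)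
    (hfg : √((∑ j, ∑ i, (f j (v j i) - g j (v j i)) ^ 2) / (n * t)) ≤ ε₂) :
    √((∑ j, ∑ i, (f j (u j i) - g j (v j i)) ^ 2) / (n * t)) ≤ L * ε₁ + ε₂ := by
  have key : √(∑ j, ∑ i, (f j (u j i) - g j (v j i)) ^ 2)
      ≤ L * √(∑ k, ∑ j, ∑ i, (u j i k - v j i k) ^ 2)
        + √(∑ j, ∑ i, (f j (v j i) - g j (v j i)) ^ 2) := by
    calc √(∑ j, ∑ i, (f j (u j i) - g j (v j i)) ^ 2)
        = √(∑ p : Fin t × Fin n, ((f p.1 (u p.1 p.2) - f p.1 (v p.1 p.2))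
            + (f p.1 (v p.1 p.2) - g p.1 (v p.1 p.2))) ^ 2) := by
          simp only [Fintype.sum_prod_type, sub_add_sub_cancel]
      _ ≤ √(∑ p : Fin t × Fin n, (f p.1 (u p.1 p.2) - f p.1 (v p.1 p.2)) ^ 2)
            + √(∑ p : Fin t × Fin n, (f p.1 (v p.1 p.2) - g p.1 (v p.1 p.2)) ^ 2) :=
          sqrt_sum_sq_add_le _ _
      _ ≤ L * √(∑ p : Fin t × Fin n, ∑ k, (u p.1 p.2 k - v p.1 p.2 k) ^ 2)
            + √(∑ p : Fin t × Fin n, (f p.1 (v p.1 p.2) - g p.1 (v p.1 p.2)) ^ 2) := by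
          gcongr
          exact sqrt_sum_sq_sub_le_of_lipschitz hL (fun p : Fin t × Fin n => f p.1)
            (fun p => hf p.1) (fun p => u p.1 p.2) (fun p => v p.1 p.2)
      _ = _ := by
          simp only [Fintype.sum_prod_type]
          congr 3
          exact (Finset.sum_comm.trans (Finset.sum_congr rfl fun _ _ => Finset.sum_comm)).symm
  rw [Real.sqrt_div (by positivity)] at huv hfg ⊢
  calc _ ≤ (L * √(∑ k, ∑ j, ∑ i, (u j i k - v j i k) ^ 2)
        + √(∑ j, ∑ i, (f j (v j i) - g j (v j i)) ^ 2)) / √(n * t) := by gcongr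
    _ = L * (√(∑ k, ∑ j, ∑ i, (u j i k - v j i k) ^ 2) / √(n * t))
        + √(∑ j, ∑ i, (f j (v j i) - g j (v j i)) ^ 2) / √(n * t) := by ring
    _ ≤ L * ε₁ + ε₂ := by gcongr

theorem covering_number_chain_rule_general
    {d r n t : ℕ} (ht : 0 < t)
    (F : Set ((Fin r → ℝ) → ℝ)) (H : Set ((Fin d → ℝ) → (Fin r → ℝ)))
    (LF : ℝ) (hLF : 0 ≤ LF)
    (hLip : ∀ f ∈ F, ∀ z z' : Fin r → ℝ, |f z - f z'| ≤ LF * eNorm (z - z'))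
    (x : Fin t → Fin n → (Fin d → ℝ))
    (ε₁ ε₂ : ℝ) :
    covNum
      -- empirical ℓ₂ pseudometric on the composed class, via parameter pairs
      (fun p q : (Fin t → (Fin r → ℝ) → ℝ) × ((Fin d → ℝ) → (Fin r → ℝ)) =>
        Real.sqrt ((∑ j : Fin t, ∑ i : Fin n,
          (p.1 j (p.2 (x j i)) - q.1 j (q.2 (x j i))) ^ 2) / (n * t)))
      {p | (∀ j, p.1 j ∈ F) ∧ p.2 ∈ H}
      (LF * ε₁ + ε₂)
    ≤ covNum
        -- empirical ℓ₂ pseudometric on H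
        (fun h h' : (Fin d → ℝ) → (Fin r → ℝ) =>
          Real.sqrt ((∑ k : Fin r, ∑ j : Fin t, ∑ i : Fin n,
            (h (x j i) k - h' (x j i) k) ^ 2) / (n * t)))
        H ε₁
      * (⨆ h : H, ⨆ j : Fin t,
          covNum
            -- empirical ℓ₂ pseudometric on F over the feature-mapped task data
            (fun f f' : (Fin r → ℝ) → ℝ =>
              Real.sqrt ((∑ i : Fin n, (f (h.1 (x j i)) - f' (h.1 (x j i))) ^ 2) / n))
            F ε₂) ^ t := by
  rcases Set.eq_empty_or_nonempty {p : (Fin t → (Fin r → ℝ) → ℝ) × ((Fin d → ℝ) → (Fin r → ℝ)) |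
      (∀ j, p.1 j ∈ F) ∧ p.2 ∈ H} with hA | ⟨⟨f₀, h₀⟩, hf₀, hh₀⟩
  · rw [hA, covNum_empty]
    exact bot_le
  refine ENat.le_mul_pow_of_forall_natCast ht.ne' (covNum_ne_zero ⟨h₀, hh₀⟩) ?_
    fun a b hN hM => ?_
  · exact ((covNum_ne_zero ⟨_, hf₀ ⟨0, ht⟩⟩).bot_lt.trans_le
      (le_iSup₂_of_le ⟨h₀, hh₀⟩ ⟨0, ht⟩ le_rfl)).ne'
  obtain ⟨CH, hCH, hCHcard⟩ := exists_isCover_card_le hN.le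
  have hF : ∀ c ∈ H, ∀ j : Fin t, covNum (fun f f' : (Fin r → ℝ) → ℝ =>
      √((∑ i, (f (c (x j i)) - f' (c (x j i))) ^ 2) / n)) F ε₂ ≤ b :=
    fun c hc j => by rw [← hM]; exact le_iSup_of_le (⟨c, hc⟩ : H) (le_iSup_of_le j le_rfl)
  have : Nonempty (Fin t) := ⟨⟨0, ht⟩⟩
  refine (covNum_prod_le (ε₂ := ε₂) (m := b ^ t) _ {f : Fin t → (Fin r → ℝ) → ℝ | ∀ j, f j ∈ F} H _
    (fun c f g => √((∑ j, ∑ i, (f j (c (x j i)) - g j (c (x j i))) ^ 2) / (n * t)))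
    hCH ?_ ?_).trans (by push_cast; gcongr)
  · intro c hc
    simpa using covNum_pi_le _ _ (fun _ => F) (hF c hc)
      fun f g hfg => by simpa using sqrt_sum_div_mul_card_le hfg
  · intro f hf h _ g c hhc hfg
    exact sqrt_mean_sq_comp_sub_le hLF f g (fun j => hLip _ (hf j)) _ _ hhc hfg

theorem covering_number_chain_rule
    {d r n t : ℕ} (hn : 0 < n) (ht : 0 < t)
    (F : Set ((Fin r → ℝ) → ℝ)) (H : Set ((Fin d → ℝ) → (Fin r → ℝ)))
    (LF : ℝ) (hLF : 0 ≤ LF)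
    (hLip : ∀ f ∈ F, ∀ z z' : Fin r → ℝ, |f z - f z'| ≤ LF * eNorm (z - z'))
    (x : Fin t → Fin n → (Fin d → ℝ))
    (ε₁ ε₂ : ℝ) (hε₁ : 0 < ε₁) (hε₂ : 0 < ε₂) :
    covNum
      -- empirical ℓ₂ pseudometric on the composed class, via parameter pairs
      (fun p q : (Fin t → (Fin r → ℝ) → ℝ) × ((Fin d → ℝ) → (Fin r → ℝ)) =>
        Real.sqrt ((∑ j : Fin t, ∑ i : Fin n,
          (p.1 j (p.2 (x j i)) - q.1 j (q.2 (x j i))) ^ 2) / (n * t)))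
      {p | (∀ j, p.1 j ∈ F) ∧ p.2 ∈ H}
      (LF * ε₁ + ε₂)
    ≤ covNum
        -- empirical ℓ₂ pseudometric on H
        (fun h h' : (Fin d → ℝ) → (Fin r → ℝ) =>
          Real.sqrt ((∑ k : Fin r, ∑ j : Fin t, ∑ i : Fin n,
            (h (x j i) k - h' (x j i) k) ^ 2) / (n * t)))
        H ε₁
      * (⨆ h : H, ⨆ j : Fin t,
          covNum
            -- empirical ℓ₂ pseudometric on F over the feature-mapped task data
            (fun f f' : (Fin r → ℝ) → ℝ =>
              Real.sqrt ((∑ i : Fin n, (f (h.1 (x j i)) - f' (h.1 (x j i))) ^ 2) / n))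
            F ε₂) ^ t :=
  covering_number_chain_rule_general ht F H LF hLF hLip x ε₁ ε₂
end
end

section
/- Consider the regression model y = (α_j*)^T h*(x) + η for tasks j = 1,…,t, where x ∼ P_x, the noise η is mean-zero with finite second moment and independent of x, h*: ℝ^d → ℝ^r is the true representation, and the loss is the squared loss ℓ(a, y) = (y − a)². For two representations ĥ, h*: ℝ^d → ℝ^r, define the block covariance Λ(ĥ, h*) = [[E_x[ĥ(x)ĥ(x)^T], E_x[ĥ(x)h*(x)^T]],[E_x[h*(x)ĥ(x)^T], E_x[h*(x)h*(x)^T]]] and suppose F_{ĥĥ} = E_x[ĥ(x)ĥ(x)^T] is positive definite; let Λ_sc(ĥ, h*) = E_x[h*(x)h*(x)^T] − E_x[h*(x)ĥ(x)^T] F_{ĥĥ}^{−1} E_x[ĥ(x)h*(x)^T]. With task class F = ℝ^r (all linear maps α̂) and test class F_0 = {α : ‖α‖₂ ≤ c₂}: the worst-case representation difference equals d_{F,F_0}(ĥ; h*) = sup_{‖α₀‖₂≤c₂} α₀^T Λ_sc(ĥ, h*) α₀ = c₂²·λ_max(Λ_sc(ĥ, h*)), the task-averaged representation difference equals d̄_{F,f*}(ĥ;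 h*) = tr( Λ_sc(ĥ, h*)·C ) where C = (1/t)∑_{j=1}^t α_j*(α_j*)^T, and tr(Λ_sc·C) ≥ λ_max(Λ_sc)·λ_min(C). Consequently, if ν̃ = λ_min(C) > 0, then for every such ĥ: d_{F,F_0}(ĥ; h*) ≤ (c₂²/ν̃)·d̄_{F,f*}(ĥ; h*). -/
/-! For a target direction `b`, the squared error of the linear fit `a ⬝ ĥ` to `b ⬝ h*` is a
quadratic in `a` with Hessian `F_ĥĥ`; completing the square shows that its infimum is
`b ⬝ Λ_sc b`, with `Λ_sc` the Schur complement. Hence the worst-case difference is the supremum of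
the quadratic form of `Λ_sc` over the ball of radius `c₂`, namely `c₂² λmax(Λ_sc)`, and the
task-averaged difference is the average of `αⱼ ⬝ Λ_sc αⱼ`, namely `tr(Λ_sc C)`.
Since `tr(A B) ≥ 0` for positive semidefinite `A`, `B` (Schur product theorem), applying it to
`C - λmin(C) • 1 ⪰ 0` and to `1 - v vᵀ ⪰ 0` for unit `v` gives
`tr(Λ_sc C) ≥ λmin(C) tr(Λ_sc) ≥ λmin(C) λmax(Λ_sc)`. -/

open MeasureTheory Matrix

noncomputable section

/-- Largest eigenvalue (Rayleigh quotient supremum) of a square matrix. -/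
def lamMax {n : ℕ} (M : Matrix (Fin n) (Fin n) ℝ) : ℝ :=
  sSup {e : ℝ | ∃ v : Fin n → ℝ, (∑ i, v i ^ 2) = 1 ∧ e = v ⬝ᵥ M.mulVec v}

/-- Smallest eigenvalue (Rayleigh quotient infimum) of a square matrix. -/
def lamMin {n : ℕ} (M : Matrix (Fin n) (Fin n) ℝ) : ℝ :=
  sInf {e : ℝ | ∃ v : Fin n → ℝ, (∑ i, v i ^ 2) = 1 ∧ e = v ⬝ᵥ M.mulVec v}

open scoped ComplexOrder in
theorem Matrix.PosSemidef.trace_mul_nonneg {𝕜 m : Type*} [RCLike 𝕜] [Fintype m]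
    {A B : Matrix m m 𝕜} (hA : A.PosSemidef) (hB : B.PosSemidef) : 0 ≤ (A * B).trace := by
  have h := (hA.hadamard hB.transpose).dotProduct_mulVec_nonneg 1
  rw [← transpose_transpose B, ← sum_hadamard_eq]
  simpa [dotProduct, mulVec] using h

lemma Matrix.trace_mul_vecMulVec {R m : Type*} [CommSemiring R] [Fintype m]
    (M : Matrix m m R) (a b : m → R) : (M * vecMulVec a b).trace = b ⬝ᵥ M *ᵥ a := by
  simp only [trace, diag, mul_apply, vecMulVec_apply, dotProduct, mulVec, Finset.mul_sum]
  exact Finset.sum_congr rfl fun i _ => Finset.sum_congr rfl fun k _ => by ring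

section SchurComplement

variable {m n : Type*} [Fintype m] [DecidableEq m] [Fintype n]

lemma quadForm_sub_eq_add_schur {P : Matrix m m ℝ} (hPs : P.IsSymm) (hPu : IsUnit P.det)
    (Q : Matrix m n ℝ) (R : Matrix n n ℝ) (a : m → ℝ) (b : n → ℝ) :
    a ⬝ᵥ P *ᵥ a - 2 * (a ⬝ᵥ Q *ᵥ b) + b ⬝ᵥ R *ᵥ b =
      (a - P⁻¹ *ᵥ Q *ᵥ b) ⬝ᵥ P *ᵥ (a - P⁻¹ *ᵥ Q *ᵥ b) + b ⬝ᵥ (R - Qᵀ * P⁻¹ * Q) *ᵥ b := by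
  set β := P⁻¹ *ᵥ Q *ᵥ b
  have hPβ : P *ᵥ β = Q *ᵥ b := by rw [mulVec_mulVec, mul_nonsing_inv P hPu, one_mulVec]
  have hβP : β ⬝ᵥ P *ᵥ a = a ⬝ᵥ Q *ᵥ b := by
    rw [dotProduct_mulVec, ← hPs.eq, vecMul_transpose, hPβ, dotProduct_comm]
  have hschur : b ⬝ᵥ (Qᵀ * P⁻¹ * Q) *ᵥ b = β ⬝ᵥ Q *ᵥ b := by
    rw [← mulVec_mulVec, ← mulVec_mulVec, dotProduct_mulVec, vecMul_transpose, dotProduct_comm]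
  rw [sub_mulVec, dotProduct_sub, hschur, mulVec_sub, dotProduct_sub, sub_dotProduct,
    sub_dotProduct, hβP, hPβ]
  ring

lemma iInf_quadForm_sub_eq_schur {P : Matrix m m ℝ} (hP : P.PosDef)
    (Q : Matrix m n ℝ) (R : Matrix n n ℝ) (b : n → ℝ) :
    ⨅ a, (a ⬝ᵥ P *ᵥ a - 2 * (a ⬝ᵥ Q *ᵥ b) + b ⬝ᵥ R *ᵥ b) = b ⬝ᵥ (R - Qᵀ * P⁻¹ * Q) *ᵥ b := by
  have hPs : P.IsSymm := by
    simpa [IsSymm, conjTranspose_eq_transpose_of_trivial] using hP.isHermitian.eq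
  simp_rw [quadForm_sub_eq_add_schur hPs ((isUnit_iff_isUnit_det P).mp hP.isUnit)]
  have hnn : ∀ w, 0 ≤ w ⬝ᵥ P *ᵥ w := fun w => by
    simpa using hP.posSemidef.dotProduct_mulVec_nonneg w
  have hlb : ∀ a, b ⬝ᵥ (R - Qᵀ * P⁻¹ * Q) *ᵥ b ≤
      (a - P⁻¹ *ᵥ Q *ᵥ b) ⬝ᵥ P *ᵥ (a - P⁻¹ *ᵥ Q *ᵥ b) + b ⬝ᵥ (R - Qᵀ * P⁻¹ * Q) *ᵥ b :=
    fun a => le_add_of_nonneg_left (hnn _)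
  refine le_antisymm ?_ (le_ciInf hlb)
  exact ciInf_le_of_le ⟨_, Set.forall_mem_range.mpr hlb⟩ (P⁻¹ *ᵥ Q *ᵥ b) (by simp)

end SchurComplement

section SecondMoments

variable {X m n : Type*} [MeasurableSpace X]

def crossMoment (μ : Measure X) (u : X → m → ℝ) (v : X → n → ℝ) : Matrix m n ℝ :=
  Matrix.of fun k l => ∫ x, u x k * v x l ∂μ

lemma isHermitian_crossMoment_self (μ : Measure X) (u : X → m → ℝ) :
    (crossMoment μ u u).IsHermitian := by
  rw [IsHermitian, conjTranspose_eq_transpose_of_trivial]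
  ext k l
  simp only [crossMoment, transpose_apply, of_apply, mul_comm]

variable [Fintype m] [Fintype n]

lemma dotProduct_mul_dotProduct (a u : m → ℝ) (b v : n → ℝ) :
    (a ⬝ᵥ u) * (b ⬝ᵥ v) = ∑ k, ∑ l, a k * b l * (u k * v l) := by
  simp only [dotProduct, Finset.sum_mul_sum]
  exact Finset.sum_congr rfl fun k _ => Finset.sum_congr rfl fun l _ => by ring

variable {μ : Measure X} {u : X → m → ℝ} {v : X → n → ℝ}

lemma integrable_dotProduct_mul_dotProduct (h : ∀ k l, Integrable (fun x => u x k * v x l) μ)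
    (a : m → ℝ) (b : n → ℝ) : Integrable (fun x => (a ⬝ᵥ u x) * (b ⬝ᵥ v x)) μ := by
  simp_rw [dotProduct_mul_dotProduct]
  exact integrable_finsetSum _ fun k _ => integrable_finsetSum _ fun l _ => (h k l).const_mul _

lemma integral_dotProduct_mul_dotProduct (h : ∀ k l, Integrable (fun x => u x k * v x l) μ)
    (a : m → ℝ) (b : n → ℝ) :
    ∫ x, (a ⬝ᵥ u x) * (b ⬝ᵥ v x) ∂μ = a ⬝ᵥ crossMoment μ u v *ᵥ b := by
  simp_rw [dotProduct_mul_dotProduct]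
  rw [integral_finsetSum _ fun k _ => integrable_finsetSum _ fun l _ => (h k l).const_mul _]
  simp_rw [integral_finsetSum _ fun l _ => (h _ l).const_mul _, integral_const_mul]
  simp only [dotProduct, mulVec, crossMoment, of_apply, Finset.mul_sum]
  exact Finset.sum_congr rfl fun k _ => Finset.sum_congr rfl fun l _ => by ring

lemma integral_sq_dotProduct_sub (huu : ∀ k l, Integrable (fun x => u x k * u x l) μ)
    (huv : ∀ k l, Integrable (fun x => u x k * v x l) μ)
    (hvv : ∀ k l, Integrable (fun x => v x k * v x l) μ) (a : m → ℝ) (b : n → ℝ) :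
    ∫ x, (a ⬝ᵥ u x - b ⬝ᵥ v x) ^ 2 ∂μ =
      a ⬝ᵥ crossMoment μ u u *ᵥ a - 2 * (a ⬝ᵥ crossMoment μ u v *ᵥ b) +
        b ⬝ᵥ crossMoment μ v v *ᵥ b := by
  have hsq : ∀ x, (a ⬝ᵥ u x - b ⬝ᵥ v x) ^ 2 = (a ⬝ᵥ u x) * (a ⬝ᵥ u x) -
      2 * ((a ⬝ᵥ u x) * (b ⬝ᵥ v x)) + (b ⬝ᵥ v x) * (b ⬝ᵥ v x) := fun x => by ring
  have hp := integrable_dotProduct_mul_dotProduct huu a a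
  have hpq := (integrable_dotProduct_mul_dotProduct huv a b).const_mul 2
  have hq := integrable_dotProduct_mul_dotProduct hvv b b
  simp_rw [hsq]
  rw [integral_add (by exact hp.sub hpq) hq, integral_sub hp hpq, integral_const_mul,
    integral_dotProduct_mul_dotProduct huu, integral_dotProduct_mul_dotProduct huv,
    integral_dotProduct_mul_dotProduct hvv]

end SecondMoments

section Rayleigh

variable {n : ℕ}

lemma isBounded_rayleigh (M : Matrix (Fin n) (Fin n) ℝ) :
    Bornology.IsBounded {e : ℝ | ∃ v : Fin n → ℝ, (∑ i, v i ^ 2) = 1 ∧ e = v ⬝ᵥ M.mulVec v} := by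
  refine ((isCompact_closedBall (0 : Fin n → ℝ) 1).image
    (f := fun v => v ⬝ᵥ M *ᵥ v) (by fun_prop)).isBounded.subset ?_
  rintro _ ⟨v, hv, rfl⟩
  refine ⟨v, ?_, rfl⟩
  rw [mem_closedBall_zero_iff, pi_norm_le_iff_of_nonneg zero_le_one]
  intro i
  rw [Real.norm_eq_abs, ← sq_le_one_iff_abs_le_one, ← hv]
  exact Finset.single_le_sum (fun j _ => sq_nonneg (v j)) (Finset.mem_univ i)

lemma rayleigh_mem (M : Matrix (Fin n) (Fin n) ℝ) {v : Fin n → ℝ} (hv : 0 < ∑ i, v i ^ 2) :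
    v ⬝ᵥ M *ᵥ v / ∑ i, v i ^ 2 ∈
      {e : ℝ | ∃ v : Fin n → ℝ, (∑ i, v i ^ 2) = 1 ∧ e = v ⬝ᵥ M.mulVec v} := by
  set s := ∑ i, v i ^ 2
  have hsqrt : (√s)⁻¹ ^ 2 = s⁻¹ := by rw [inv_pow, Real.sq_sqrt hv.le]
  refine ⟨(√s)⁻¹ • v, ?_, ?_⟩
  · simp_rw [Pi.smul_apply, smul_eq_mul, mul_pow, ← Finset.mul_sum, hsqrt]
    exact inv_mul_cancel₀ hv.ne'
  · rw [smul_dotProduct, mulVec_smul, dotProduct_smul, smul_smul, ← sq, hsqrt, smul_eq_mul,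
      div_eq_inv_mul]

lemma eq_zero_of_sum_sq_eq_zero {v : Fin n → ℝ} (hv : ∑ i, v i ^ 2 = 0) : v = 0 := by
  funext i
  exact pow_eq_zero_iff two_ne_zero |>.mp <|
    (Finset.sum_eq_zero_iff_of_nonneg fun j _ => sq_nonneg (v j)).mp hv i (Finset.mem_univ i)

lemma dotProduct_mulVec_le_lamMax_mul (M : Matrix (Fin n) (Fin n) ℝ) (v : Fin n → ℝ) :
    v ⬝ᵥ M *ᵥ v ≤ lamMax M * ∑ i, v i ^ 2 := by
  rcases (Finset.sum_nonneg fun i _ => sq_nonneg (v i)).eq_or_lt with hv | hv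
  · simp [eq_zero_of_sum_sq_eq_zero hv.symm]
  · rw [← div_le_iff₀ hv]
    exact le_csSup (isBounded_rayleigh M).bddAbove (rayleigh_mem M hv)

lemma lamMin_mul_le_dotProduct_mulVec (M : Matrix (Fin n) (Fin n) ℝ) (v : Fin n → ℝ) :
    lamMin M * ∑ i, v i ^ 2 ≤ v ⬝ᵥ M *ᵥ v := by
  rcases (Finset.sum_nonneg fun i _ => sq_nonneg (v i)).eq_or_lt with hv | hv
  · simp [eq_zero_of_sum_sq_eq_zero hv.symm]
  · rw [← le_div_iff₀ hv]
    exact csInf_le (isBounded_rayleigh M).bddBelow (rayleigh_mem M hv)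

lemma lamMax_nonneg {M : Matrix (Fin n) (Fin n) ℝ} (hM : ∀ v, 0 ≤ v ⬝ᵥ M *ᵥ v) :
    0 ≤ lamMax M :=
  Real.sSup_nonneg <| by rintro _ ⟨v, -, rfl⟩; exact hM v

lemma lamMin_nonneg {M : Matrix (Fin n) (Fin n) ℝ} (hM : ∀ v, 0 ≤ v ⬝ᵥ M *ᵥ v) :
    0 ≤ lamMin M :=
  Real.sInf_nonneg <| by rintro _ ⟨v, -, rfl⟩; exact hM v

lemma eNorm_le_iff {a : Fin n → ℝ} {c : ℝ} (hc : 0 ≤ c) :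
    eNorm a ≤ c ↔ ∑ i, a i ^ 2 ≤ c ^ 2 := by
  rw [eNorm, Real.sqrt_le_iff, and_iff_right hc]

lemma iSup_eNorm_le_dotProduct_mulVec {L : Matrix (Fin n) (Fin n) ℝ}
    (hL : ∀ v, 0 ≤ v ⬝ᵥ L *ᵥ v) {c : ℝ} (hc : 0 ≤ c) :
    ⨆ a : {a : Fin n → ℝ // eNorm a ≤ c}, a.1 ⬝ᵥ L *ᵥ a.1 = c ^ 2 * lamMax L := by
  have hball : ∀ a : {a : Fin n → ℝ // eNorm a ≤ c}, a.1 ⬝ᵥ L *ᵥ a.1 ≤ c ^ 2 * lamMax L :=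
    fun a => (dotProduct_mulVec_le_lamMax_mul L a.1).trans <| by
      rw [mul_comm]
      exact mul_le_mul_of_nonneg_right ((eNorm_le_iff hc).mp a.2) (lamMax_nonneg hL)
  have hbdd := (⟨_, Set.forall_mem_range.mpr hball⟩ :
    BddAbove (Set.range fun a : {a : Fin n → ℝ // eNorm a ≤ c} => a.1 ⬝ᵥ L *ᵥ a.1))
  have : Nonempty {a : Fin n → ℝ // eNorm a ≤ c} := ⟨⟨0, by simp [eNorm, hc]⟩⟩
  refine le_antisymm (ciSup_le hball) ?_
  rw [← smul_eq_mul, lamMax, ← Real.sSup_smul_of_nonneg (sq_nonneg c)]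
  refine Real.sSup_le ?_ (le_ciSup_of_le hbdd ⟨0, by simp [eNorm, hc]⟩ (by simp))
  rintro _ ⟨_, ⟨v, hv, rfl⟩, rfl⟩
  have hcv : eNorm (c • v) ≤ c := by
    simp_rw [eNorm_le_iff hc, Pi.smul_apply, smul_eq_mul, mul_pow, ← Finset.mul_sum, hv, mul_one,
      le_refl]
  refine le_of_eq_of_le ?_ (le_ciSup hbdd ⟨c • v, hcv⟩)
  rw [smul_dotProduct, mulVec_smul, dotProduct_smul, smul_smul, ← sq]

lemma posSemidef_one_sub_vecMulVec {v : Fin n → ℝ} (hv : ∑ i, v i ^ 2 = 1) :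
    (1 - vecMulVec v v).PosSemidef := by
  refine .of_dotProduct_mulVec_nonneg
    (isHermitian_one.sub (posSemidef_vecMulVec_self_star v).isHermitian) fun w => ?_
  have hcs := Finset.sum_mul_sq_le_sq_mul_sq Finset.univ v w
  rw [hv, one_mul] at hcs
  rw [star_trivial, sub_mulVec, one_mulVec, vecMulVec_mulVec, op_smul_eq_smul, dotProduct_sub,
    dotProduct_smul, smul_eq_mul, dotProduct_comm w v, ← sq, sub_nonneg]
  simpa [dotProduct, sq] using hcs

lemma lamMax_le_trace {L : Matrix (Fin n) (Fin n) ℝ} (hL : L.PosSemidef) :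
    lamMax L ≤ L.trace := by
  refine Real.sSup_le ?_ hL.trace_nonneg
  rintro _ ⟨v, hv, rfl⟩
  have h := hL.trace_mul_nonneg (posSemidef_one_sub_vecMulVec hv)
  rwa [Matrix.mul_sub, trace_sub, Matrix.mul_one, trace_mul_vecMulVec, sub_nonneg] at h

lemma posSemidef_sub_lamMin_smul_one {C : Matrix (Fin n) (Fin n) ℝ} (hC : C.IsHermitian) :
    (C - lamMin C • 1).PosSemidef := by
  refine .of_dotProduct_mulVec_nonneg (hC.sub (isHermitian_one.smul (.all _))) fun w => ?_
  rw [star_trivial, sub_mulVec, dotProduct_sub, smul_mulVec, one_mulVec, dotProduct_smul,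
    smul_eq_mul, sub_nonneg]
  simpa [dotProduct, sq] using lamMin_mul_le_dotProduct_mulVec C w

lemma lamMax_mul_lamMin_le_trace_mul {L C : Matrix (Fin n) (Fin n) ℝ} (hL : L.PosSemidef)
    (hC : C.PosSemidef) : lamMax L * lamMin C ≤ (L * C).trace := by
  have h := hL.trace_mul_nonneg (posSemidef_sub_lamMin_smul_one hC.isHermitian)
  rw [Matrix.mul_sub, trace_sub, Matrix.mul_smul, Matrix.mul_one, trace_smul, smul_eq_mul,
    sub_nonneg] at h
  calc lamMax L * lamMin C ≤ L.trace * lamMin C :=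
        mul_le_mul_of_nonneg_right (lamMax_le_trace hL)
          (lamMin_nonneg fun v => by simpa using hC.dotProduct_mulVec_nonneg v)
    _ ≤ (L * C).trace := by rwa [mul_comm]

end Rayleigh

theorem linear_task_diversity_squared_loss_general
    {X : Type*} [MeasurableSpace X] {r t : ℕ}
    (Px : Measure X)
    (hhat hstar : X → Fin r → ℝ)
    (hint : ∀ u v : X → Fin r → ℝ, (u = hhat ∨ u = hstar) → (v = hhat ∨ v = hstar) →
      ∀ k l : Fin r, Integrable (fun x => u x k * v x l) Px)
    (αs : Fin t → Fin r → ℝ) (c2 : ℝ) (hc2 : 0 < c2)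
    (Fhh Fhs Fss Lsc Cmat : Matrix (Fin r) (Fin r) ℝ)
    (hFhh : Fhh = Matrix.of fun k l => ∫ x, hhat x k * hhat x l ∂Px)
    (hFhs : Fhs = Matrix.of fun k l => ∫ x, hhat x k * hstar x l ∂Px)
    (hFss : Fss = Matrix.of fun k l => ∫ x, hstar x k * hstar x l ∂Px)
    (hpos : Fhh.PosDef)
    (hLsc : Lsc = Fss - Fhsᵀ * Fhh⁻¹ * Fhs)
    (hC : Cmat = (t : ℝ)⁻¹ • ∑ j : Fin t, Matrix.vecMulVec (αs j) (αs j))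
    (dworst davg : ℝ)
    (hdw : dworst = ⨆ α0 : {a : Fin r → ℝ // eNorm a ≤ c2},
        ⨅ αh : Fin r → ℝ,
          ∫ x, ((∑ i, αh i * hhat x i) - (∑ i, α0.1 i * hstar x i)) ^ 2 ∂Px)
    (hda : davg = (t : ℝ)⁻¹ * ∑ j : Fin t, ⨅ αh : Fin r → ℝ,
        ∫ x, ((∑ i, αh i * hhat x i) - (∑ i, αs j i * hstar x i)) ^ 2 ∂Px) :
    dworst = c2 ^ 2 * lamMax Lsc ∧
    davg = (Lsc * Cmat).trace ∧
    lamMax Lsc * lamMin Cmat ≤ (Lsc * Cmat).trace ∧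
    (0 < lamMin Cmat → dworst ≤ (c2 ^ 2 / lamMin Cmat) * davg) := by
  have hexcess : ∀ b : Fin r → ℝ, (⨅ αh : Fin r → ℝ,
      ∫ x, ((∑ i, αh i * hhat x i) - (∑ i, b i * hstar x i)) ^ 2 ∂Px) = b ⬝ᵥ Lsc *ᵥ b := by
    intro b
    rw [hLsc, ← iInf_quadForm_sub_eq_schur hpos Fhs Fss b, hFhh, hFhs, hFss]
    exact iInf_congr fun a => integral_sq_dotProduct_sub (hint _ _ (.inl rfl) (.inl rfl))
      (hint _ _ (.inl rfl) (.inr rfl)) (hint _ _ (.inr rfl) (.inr rfl)) a b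
  have hLsc_nonneg : ∀ b, 0 ≤ b ⬝ᵥ Lsc *ᵥ b := fun b =>
    hexcess b ▸ le_ciInf fun _ => integral_nonneg fun _ => sq_nonneg _
  have hLsc_psd : Lsc.PosSemidef := by
    refine .of_dotProduct_mulVec_nonneg ?_ fun b => by simpa using hLsc_nonneg b
    simpa [hLsc, conjTranspose_eq_transpose_of_trivial] using
      (hFss ▸ isHermitian_crossMoment_self Px hstar : Fss.IsHermitian).sub
        (isHermitian_conjTranspose_mul_mul Fhs hpos.isHermitian.inv)
  have hC_psd : Cmat.PosSemidef := hC ▸ (posSemidef_sum _ fun j _ => by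
    simpa using posSemidef_vecMulVec_self_star (αs j)).smul (by positivity)
  have hdworst : dworst = c2 ^ 2 * lamMax Lsc := by
    rw [hdw, ← iSup_eNorm_le_dotProduct_mulVec hLsc_nonneg hc2.le]
    exact iSup_congr fun a => hexcess a.1
  have hdavg : davg = (Lsc * Cmat).trace := by
    simp_rw [hda, hC, Matrix.mul_smul, trace_smul, Matrix.mul_sum, trace_sum, trace_mul_vecMulVec,
      hexcess, smul_eq_mul]
  have htrace := lamMax_mul_lamMin_le_trace_mul hLsc_psd hC_psd
  refine ⟨hdworst, hdavg, htrace, fun hν => ?_⟩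
  rw [hdworst, hdavg, div_mul_eq_mul_div, le_div_iff₀ hν, mul_assoc]
  exact mul_le_mul_of_nonneg_left htrace (sq_nonneg c2)

theorem linear_task_diversity_squared_loss
    {X : Type*} [MeasurableSpace X] {r t : ℕ} (hr : 0 < r) (ht : 0 < t)
    (Px : Measure X) [IsProbabilityMeasure Px]
    (hhat hstar : X → Fin r → ℝ)
    (hint : ∀ u v : X → Fin r → ℝ, (u = hhat ∨ u = hstar) → (v = hhat ∨ v = hstar) →
      ∀ k l : Fin r, Integrable (fun x => u x k * v x l) Px)
    (αs : Fin t → Fin r → ℝ) (c2 : ℝ) (hc2 : 0 < c2)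
    (Fhh Fhs Fss Lsc Cmat : Matrix (Fin r) (Fin r) ℝ)
    (hFhh : Fhh = Matrix.of fun k l => ∫ x, hhat x k * hhat x l ∂Px)
    (hFhs : Fhs = Matrix.of fun k l => ∫ x, hhat x k * hstar x l ∂Px)
    (hFss : Fss = Matrix.of fun k l => ∫ x, hstar x k * hstar x l ∂Px)
    (hpos : Fhh.PosDef)
    (hLsc : Lsc = Fss - Fhsᵀ * Fhh⁻¹ * Fhs)
    (hC : Cmat = (t : ℝ)⁻¹ • ∑ j : Fin t, Matrix.vecMulVec (αs j) (αs j))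
    (dworst davg : ℝ)
    (hdw : dworst = ⨆ α0 : {a : Fin r → ℝ // eNorm a ≤ c2},
        ⨅ αh : Fin r → ℝ,
          ∫ x, ((∑ i, αh i * hhat x i) - (∑ i, α0.1 i * hstar x i)) ^ 2 ∂Px)
    (hda : davg = (t : ℝ)⁻¹ * ∑ j : Fin t, ⨅ αh : Fin r → ℝ,
        ∫ x, ((∑ i, αh i * hhat x i) - (∑ i, αs j i * hstar x i)) ^ 2 ∂Px) :
    dworst = c2 ^ 2 * lamMax Lsc ∧
    davg = (Lsc * Cmat).trace ∧
    lamMax Lsc * lamMin Cmat ≤ (Lsc * Cmat).trace ∧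
    (0 < lamMin Cmat → dworst ≤ (c2 ^ 2 / lamMin Cmat) * davg) :=
  linear_task_diversity_squared_loss_general Px hhat hstar hint αs c2 hc2 Fhh Fhs Fss Lsc Cmat hFhh
    hFhs hFss hpos hLsc hC dworst davg hdw hda
end
end

section
/- Let H = { x ↦ B^T x : B ∈ ℝ^{d×r}, B^T B = I_r } be the class of linear feature maps with orthonormal columns. For any dataset X of N points x_1,…,x_N in ℝ^d with empirical covariance Σ̂_X = (1/N)∑_{i=1}^N x_i x_i^T, the empirical Gaussian complexity of H satisfies Ĝ_X(H) ≤ (r/√N)·√( tr(Σ̂_X) ). -/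
/-! Write `b_k` for the columns of `B` and `v_k = ∑ᵢ g_{ki} xᵢ`. The objective is `∑_k ⟪b_k, v_k⟫`,
which by Cauchy–Schwarz and `∑_k ‖b_k‖² = tr (BᵀB) = r` is at most `√r · (∑_k ‖v_k‖²)^{1/2}`,
uniformly in `B`. By Jensen the expectation of this bound is at most `√r · (∑_k 𝔼‖v_k‖²)^{1/2}`,
and `𝔼‖v_k‖² = ∑ᵢ ‖xᵢ‖² = N · tr Σ̂` because the `g_{ki}` are independent standard Gaussians. -/

open MeasureTheory ProbabilityTheory Matrix

section Gaussian

variable {ι : Type*} [Fintype ι]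

lemma memLp_sum_mul_gaussian (w : ι → ℝ) :
    MemLp (fun g : ι → ℝ => ∑ a, w a * g a) 2 (Measure.pi fun _ : ι => gaussianReal 0 1) :=
  memLp_finsetSum _ fun a _ => ((memLp_id_gaussianReal 2).comp_measurePreserving
    (measurePreserving_eval _ a)).const_mul (w a)

lemma integral_sum_mul_gaussian_sq (w : ι → ℝ) :
    ∫ g, (∑ a, w a * g a) ^ 2 ∂(Measure.pi fun _ : ι => gaussianReal 0 1) = ∑ a, w a ^ 2 := by
  have hmean : ∫ g, ∑ a, w a * g a ∂(Measure.pi fun _ : ι => gaussianReal 0 1) = 0 := by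
    rw [integral_finsetSum _ fun a _ =>
      (integrable_eval ((memLp_id_gaussianReal 1).integrable le_rfl)).const_mul (w a)]
    refine Finset.sum_eq_zero fun a _ => ?_
    have heval := integral_comp_eval (μ := fun _ : ι => gaussianReal 0 1) (i := a)
      (f := fun y : ℝ => y) aestronglyMeasurable_id
    rw [integral_const_mul, heval, integral_id_gaussianReal, mul_zero]
  rw [← variance_of_integral_eq_zero (memLp_sum_mul_gaussian w).aemeasurable hmean]
  have hvar := variance_sum_pi (μ := fun _ : ι => gaussianReal 0 1) (X := fun a y => w a * y)
    fun a => (memLp_id_gaussianReal 2).const_mul (w a)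
  simp only [variance_const_mul _ (fun y : ℝ => y), variance_fun_id_gaussianReal] at hvar
  convert hvar using 2
  · ext g; simp
  · simp

end Gaussian

section Jensen

variable {α : Type*} [MeasurableSpace α] {μ : Measure α} {f : α → ℝ}

lemma integrable_sqrt_of_nonneg [IsFiniteMeasure μ] (hf0 : ∀ a, 0 ≤ f a)
    (hf : Integrable f μ) : Integrable (fun a => √(f a)) μ := by
  have hm : AEStronglyMeasurable (fun a => √(f a)) μ :=
    hf.aemeasurable.sqrt.aestronglyMeasurable
  refine ((memLp_two_iff_integrable_sq hm).2 ?_).integrable one_le_two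
  simpa [Real.sq_sqrt (hf0 _)] using hf

lemma integral_sqrt_le_sqrt_integral [IsProbabilityMeasure μ] (hf0 : ∀ a, 0 ≤ f a)
    (hf : Integrable f μ) : ∫ a, √(f a) ∂μ ≤ √(∫ a, f a ∂μ) :=
  Real.strictConcaveOn_sqrt.concaveOn.le_map_integral Real.continuous_sqrt.continuousOn
    isClosed_Ici (ae_of_all _ hf0) hf (integrable_sqrt_of_nonneg hf0 hf)

end Jensen

section Features

variable {m n ι : Type*} [Fintype m] [Fintype n] [Fintype ι]

lemma sum_sq_eq_card_of_transpose_mul_self_eq_one [DecidableEq n] {B : Matrix m n ℝ}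
    (hB : Bᵀ * B = 1) : ∑ j, ∑ k, B j k ^ 2 = Fintype.card n :=
  calc ∑ j, ∑ k, B j k ^ 2 = trace (Bᵀ * B) := by
        rw [Finset.sum_comm]; simp [trace, mul_apply, sq]
    _ = Fintype.card n := by rw [hB, trace_one]

lemma sum_mul_mulVec_transpose_le [DecidableEq n] {B : Matrix m n ℝ} (hB : Bᵀ * B = 1)
    (x : ι → m → ℝ) (g : n × ι → ℝ) :
    ∑ k, ∑ i, g (k, i) * (Bᵀ *ᵥ x i) k
      ≤ √(Fintype.card n) * √(∑ j, ∑ k, (∑ i, x i j * g (k, i)) ^ 2) := by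
  have hpair : ∑ k, ∑ i, g (k, i) * (Bᵀ *ᵥ x i) k
      = ∑ j, ∑ k, B j k * ∑ i, x i j * g (k, i) := by
    simp only [mulVec, dotProduct, transpose_apply, Finset.mul_sum]
    conv_lhs => enter [2, k]; rw [Finset.sum_comm]
    rw [Finset.sum_comm]
    exact Finset.sum_congr rfl fun j _ => Finset.sum_congr rfl fun k _ =>
      Finset.sum_congr rfl fun i _ => by ring
  rw [hpair, ← sum_sq_eq_card_of_transpose_mul_self_eq_one hB]
  simpa only [Fintype.sum_prod_type] using Real.sum_mul_le_sqrt_mul_sqrt Finset.univ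
    (fun p : m × n => B p.1 p.2) (fun p : m × n => ∑ i, x i p.1 * g (p.2, i))

lemma sum_mul_apply_mk_eq_sum_ite [DecidableEq n] (c : ι → ℝ) (k : n) (g : n × ι → ℝ) :
    ∑ i, c i * g (k, i) = ∑ a : n × ι, (if a.1 = k then c a.2 else 0) * g a := by
  simp [Fintype.sum_prod_type, ite_mul]

lemma memLp_sum_mul_gaussian_slice (c : ι → ℝ) (k : n) :
    MemLp (fun g : n × ι → ℝ => ∑ i, c i * g (k, i)) 2
      (Measure.pi fun _ : n × ι => gaussianReal 0 1) := by
  classical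
  simpa only [sum_mul_apply_mk_eq_sum_ite c k] using memLp_sum_mul_gaussian _

lemma integral_sum_mul_gaussian_slice_sq (c : ι → ℝ) (k : n) :
    ∫ g, (∑ i, c i * g (k, i)) ^ 2 ∂(Measure.pi fun _ : n × ι => gaussianReal 0 1)
      = ∑ i, c i ^ 2 := by
  classical
  simp_rw [sum_mul_apply_mk_eq_sum_ite c k, integral_sum_mul_gaussian_sq]
  simp [Fintype.sum_prod_type, ite_pow]

lemma integrable_sum_sum_sq_gaussian (x : ι → m → ℝ) :
    Integrable (fun g => ∑ j, ∑ k, (∑ i, x i j * g (k, i)) ^ 2)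
      (Measure.pi fun _ : n × ι => gaussianReal 0 1) :=
  integrable_finsetSum _ fun _ _ => integrable_finsetSum _ fun _ _ =>
    (memLp_sum_mul_gaussian_slice _ _).integrable_sq

lemma integral_sum_sum_sq_gaussian (x : ι → m → ℝ) :
    ∫ g, ∑ j, ∑ k, (∑ i, x i j * g (k, i)) ^ 2 ∂(Measure.pi fun _ : n × ι => gaussianReal 0 1)
      = Fintype.card n * ∑ i, x i ⬝ᵥ x i := by
  rw [integral_finsetSum _ fun _ _ => integrable_finsetSum _ fun _ _ =>
    (memLp_sum_mul_gaussian_slice _ _).integrable_sq]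
  simp_rw [integral_finsetSum _ fun _ _ => (memLp_sum_mul_gaussian_slice _ _).integrable_sq,
    integral_sum_mul_gaussian_slice_sq]
  simp only [dotProduct, Finset.mul_sum, Finset.sum_const, Finset.card_univ, nsmul_eq_mul, sq]
  exact Finset.sum_comm

lemma integral_sqrt_sum_sum_sq_gaussian_le (x : ι → m → ℝ) :
    ∫ g, √(∑ j, ∑ k, (∑ i, x i j * g (k, i)) ^ 2)
        ∂(Measure.pi fun _ : n × ι => gaussianReal 0 1)
      ≤ √(Fintype.card n * ∑ i, x i ⬝ᵥ x i) := by
  rw [← integral_sum_sum_sq_gaussian]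
  exact integral_sqrt_le_sqrt_integral (fun _ => by positivity)
    (integrable_sum_sum_sq_gaussian x)

end Features

theorem gaussian_complexity_orthonormal_linear_features_general
    {d r N : ℕ} (x : Fin N → (Fin d → ℝ)) :
    (∫ g : Fin r × Fin N → ℝ,
        (⨆ B : {B : Matrix (Fin d) (Fin r) ℝ // Bᵀ * B = 1},
          (∑ k : Fin r, ∑ i : Fin N, g (k, i) * ((B.1)ᵀ.mulVec (x i)) k) / N)
        ∂(Measure.pi fun _ : Fin r × Fin N => gaussianReal 0 1))
      ≤ ((r : ℝ) / Real.sqrt N) *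
          Real.sqrt (((N : ℝ)⁻¹ • ∑ i : Fin N, Matrix.vecMulVec (x i) (x i)).trace) := by
  set μ := Measure.pi fun _ : Fin r × Fin N => gaussianReal 0 1
  set Q : (Fin r × Fin N → ℝ) → ℝ := fun g => ∑ j, ∑ k, (∑ i, x i j * g (k, i)) ^ 2
  set F : (Fin r × Fin N → ℝ) → ℝ := fun g =>
    ⨆ B : {B : Matrix (Fin d) (Fin r) ℝ // Bᵀ * B = 1},
      (∑ k : Fin r, ∑ i : Fin N, g (k, i) * ((B.1)ᵀ.mulVec (x i)) k) / N
  have hF (g) : F g ≤ √r * √(Q g) / N := Real.iSup_le (fun B =>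
    by simpa using div_le_div_of_nonneg_right (sum_mul_mulVec_transpose_le B.2 x g) N.cast_nonneg)
    (by positivity)
  have hQ : Integrable (fun g => √(Q g)) μ :=
    integrable_sqrt_of_nonneg (fun _ => by positivity) (integrable_sum_sum_sq_gaussian x)
  have hbound : ∫ g, √r * √(Q g) / N ∂μ
      ≤ ((r : ℝ) / √N) * √(((N : ℝ)⁻¹ • ∑ i, vecMulVec (x i) (x i)).trace) :=
    calc ∫ g, √r * √(Q g) / N ∂μ = √r * (∫ g, √(Q g) ∂μ) / N := by
          rw [integral_div, integral_const_mul]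
      _ ≤ √r * √(r * ∑ i, x i ⬝ᵥ x i) / N := by
          gcongr
          simpa using integral_sqrt_sum_sum_sq_gaussian_le (n := Fin r) x
      _ = _ := by
          simp only [trace_smul, trace_sum, trace_vecMulVec, smul_eq_mul]
          rw [Real.sqrt_mul r.cast_nonneg, Real.sqrt_mul (inv_nonneg.2 N.cast_nonneg),
            Real.sqrt_inv, ← mul_assoc, Real.mul_self_sqrt r.cast_nonneg]
          conv_lhs => rw [← Real.mul_self_sqrt (N.cast_nonneg : (0 : ℝ) ≤ N)]
          ring
  -- A non-integrable `F` has Bochner integral `0`, which is below the nonnegative bound.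
  by_cases hint : Integrable F μ
  · exact (integral_mono hint ((hQ.const_mul _).div_const _) hF).trans hbound
  · rw [integral_undef hint]
    positivity

theorem gaussian_complexity_orthonormal_linear_features
    {d r N : ℕ} (hN : 0 < N) (x : Fin N → (Fin d → ℝ)) :
    (∫ g : Fin r × Fin N → ℝ,
        (⨆ B : {B : Matrix (Fin d) (Fin r) ℝ // Bᵀ * B = 1},
          (∑ k : Fin r, ∑ i : Fin N, g (k, i) * ((B.1)ᵀ.mulVec (x i)) k) / N)
        ∂(Measure.pi fun _ : Fin r × Fin N => gaussianReal 0 1))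
      ≤ ((r : ℝ) / Real.sqrt N) *
          Real.sqrt (((N : ℝ)⁻¹ • ∑ i : Fin N, Matrix.vecMulVec (x i) (x i)).trace) :=
  gaussian_complexity_orthonormal_linear_features_general x
end
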